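/- Let d₀(x,y) = √(D_JS(P_x ‖ P_y)) where P_x, P_y are Bernoulli distributions with parameters x, y ∈ [0,1] and D_JS is the Jensen–Shannon divergence. Then d₀ satisfies the triangle inequality on [0,1], i.e., d₀(x,z) ≤ d₀(x,y) + d₀(y,z) for all x, y, z ∈ [0,1]. -/

import Mathlib

/-- Kullback-Leibler divergence for pmfs on a finite set, with the convention
`0 · log(0/q) = 0`. -/
noncomputable def klDiv {α : Type*} [Fintype α] (P Q : α → ℝ) : ℝ :=
  ∑ x, if P x = 0 then 0 else P x * Real.log (P x / Q x)

/-- Jensen–Shannon divergence `½(KL(P‖M) + KL(Q‖M))` with `M = (P+Q)/2`. -/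
noncomputable def jsDiv {α : Type*} [Fintype α] (P Q : α → ℝ) : ℝ :=
  (klDiv P (fun x => (P x + Q x) / 2) + klDiv Q (fun x => (P x + Q x) / 2)) / 2

/-- The Bernoulli pmf with parameter `p`, as a pmf on `Fin 2`. -/
noncomputable def bern (p : ℝ) : Fin 2 → ℝ := ![p, 1 - p]

/-!
For `a, b ≥ 0` the one-atom Jensen–Shannon term `a log (2a/(a+b)) + b log (2b/(a+b))` equals
`∫₀^∞ (e^{-sa/2} - e^{-sb/2})² / s² ds`: the integrand is the Laplace transform at `s` of the tent
function `min (t - a) (b - t)` on `[a, b]`, so integrating in `s` first (Tonelli) leaves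
`∫ₐᵇ min (t - a) (b - t) / t dt`, which evaluates to the term. Hence the square root of the term is
the `L²(0, ∞)` distance between the features `s ↦ e^{-sa/2} / s` and satisfies the triangle
inequality. For Bernoulli laws `D_JS` is the mean of the terms at `(x, z)` and `(1 - x, 1 - z)`,
and the triangle inequality survives this by Minkowski's inequality in `ℝ²`.
-/

open Real MeasureTheory Set intervalIntegral

lemma klDiv_eq_sum_mul_log {α : Type*} [Fintype α] (P Q : α → ℝ) :
    klDiv P Q = ∑ x, P x * log (P x / Q x) :=
  Finset.sum_congr rfl fun x _ => by split_ifs with h <;> simp [h]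

-- `0 * log _ = 0` in Lean, so the convention `0 log 0 = 0` needs no case split.
noncomputable def jsSummand (a b : ℝ) : ℝ :=
  a * log (a / ((a + b) / 2)) + b * log (b / ((a + b) / 2))

lemma jsSummand_comm (a b : ℝ) : jsSummand a b = jsSummand b a := by
  rw [jsSummand, jsSummand, add_comm a b, add_comm]

lemma jsSummand_self (a : ℝ) : jsSummand a a = 0 := by
  rcases eq_or_ne a 0 with rfl | ha
  · simp [jsSummand]
  · simp [jsSummand, ← two_mul, ha]

lemma jsDiv_bern (x z : ℝ) :
    jsDiv (bern x) (bern z) = (jsSummand x z + jsSummand (1 - x) (1 - z)) / 2 := by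
  simp only [jsDiv, klDiv_eq_sum_mul_log, bern, Fin.sum_univ_two, Matrix.cons_val_zero,
    Matrix.cons_val_one, Matrix.cons_val_fin_one, jsSummand]
  ring

def tent (a b t : ℝ) : ℝ := min (t - a) (b - t)

lemma continuous_tent (a b : ℝ) : Continuous (tent a b) := by
  unfold tent; fun_prop

lemma tent_nonneg {a b t : ℝ} (ht : t ∈ Icc a b) : 0 ≤ tent a b t :=
  le_min (by linarith [ht.1]) (by linarith [ht.2])

lemma integral_tent_mul {a b : ℝ} {f : ℝ → ℝ} (hab : a ≤ b)
    (hf : IntervalIntegrable (fun t => tent a b t * f t) volume a b) :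
    ∫ t in a..b, tent a b t * f t =
      (∫ t in a..(a + b) / 2, (t - a) * f t) + ∫ t in (a + b) / 2..b, (b - t) * f t := by
  have ham : a ≤ (a + b) / 2 := by linarith
  have hmb : (a + b) / 2 ≤ b := by linarith
  have hmid : (a + b) / 2 ∈ uIcc a b := by rw [uIcc_of_le hab]; exact ⟨ham, hmb⟩
  rw [← integral_add_adjacent_intervals (hf.mono_set (uIcc_subset_uIcc_left hmid))
    (hf.mono_set (uIcc_subset_uIcc_right hmid))]
  congr 1
  · refine integral_congr fun t ht => ?_
    rw [uIcc_of_le ham] at ht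
    simp only [tent, min_eq_left (show t - a ≤ b - t by linarith [ht.2])]
  · refine integral_congr fun t ht => ?_
    rw [uIcc_of_le hmb] at ht
    simp only [tent, min_eq_right (show b - t ≤ t - a by linarith [ht.1])]

noncomputable def jsFeature (a s : ℝ) : ℝ := exp (-(s * a) / 2) / s

lemma integral_tent_mul_exp {a b s : ℝ} (hab : a ≤ b) (hs : s ≠ 0) :
    ∫ t in a..b, tent a b t * exp (-(s * t)) = (jsFeature a s - jsFeature b s) ^ 2 := by
  have hexp : ∀ t, HasDerivAt (fun t => exp (-(s * t))) (exp (-(s * t)) * -s) t := fun t => by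
    simpa using ((hasDerivAt_id' t).const_mul s).neg.exp
  have hup : ∀ t, HasDerivAt (fun t => -((t - a) / s + 1 / s ^ 2) * exp (-(s * t)))
      ((t - a) * exp (-(s * t))) t := fun t =>
    (((((hasDerivAt_id' t).sub_const a).div_const s).add_const (1 / s ^ 2)).neg.mul
      (hexp t)).congr_deriv (by simp only [Pi.neg_apply]; field_simp; ring)
  have hdown : ∀ t, HasDerivAt (fun t => (1 / s ^ 2 - (b - t) / s) * exp (-(s * t)))
      ((b - t) * exp (-(s * t))) t := fun t =>
    (((((hasDerivAt_id' t).const_sub b).div_const s).const_sub (1 / s ^ 2)).mul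
      (hexp t)).congr_deriv (by field_simp; ring)
  rw [integral_tent_mul hab (((continuous_tent a b).mul (by fun_prop)).intervalIntegrable _ _),
    integral_eq_sub_of_hasDerivAt (fun t _ => hup t)
      (Continuous.intervalIntegrable (by fun_prop) _ _),
    integral_eq_sub_of_hasDerivAt (fun t _ => hdown t)
      (Continuous.intervalIntegrable (by fun_prop) _ _)]
  have hsq : ∀ c, exp (-(s * c)) = exp (-(s * c) / 2) ^ 2 := fun c => by
    rw [← exp_nat_mul]; ring_nf
  have hmid : exp (-(s * ((a + b) / 2))) = exp (-(s * a) / 2) * exp (-(s * b) / 2) := by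
    rw [← exp_add]; ring_nf
  rw [hsq a, hsq b, hmid, jsFeature, jsFeature]
  field_simp
  ring

lemma integrableOn_tent_mul_inv {a b : ℝ} (ha : 0 ≤ a) :
    IntegrableOn (fun t => tent a b t * t⁻¹) (Ioc a b) := by
  refine Integrable.mono' (integrable_const (1 : ℝ))
    ((continuous_tent a b).measurable.mul measurable_inv).aestronglyMeasurable ?_
  filter_upwards [ae_restrict_mem measurableSet_Ioc] with t ht
  have ht0 : 0 < t := ha.trans_lt ht.1
  rw [norm_of_nonneg (mul_nonneg (tent_nonneg (Ioc_subset_Icc_self ht)) (inv_nonneg.2 ht0.le)),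
    ← div_eq_mul_inv, div_le_one ht0]
  exact (min_le_left _ _).trans (by linarith)

lemma integral_sub_mul_inv_left {a m : ℝ} (ha : 0 ≤ a) (ham : a ≤ m) :
    ∫ t in a..m, (t - a) * t⁻¹ = (m - a) - a * log (m / a) := by
  rcases ha.eq_or_lt with rfl | ha
  · have hae : ∀ᵐ t : ℝ, t ≠ 0 := (countable_singleton 0).ae_notMem _
    rw [integral_congr_ae (hae.mono fun t ht _ => by rw [sub_zero, mul_inv_cancel₀ ht])]
    simp
  · have hpos : ∀ t ∈ uIcc a m, 0 < t := fun t ht => ha.trans_le (by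
      rw [uIcc_of_le ham] at ht; exact ht.1)
    rw [integral_congr (g := fun t => 1 - a * t⁻¹) fun t ht => by
        field_simp [(hpos t ht).ne'],
      integral_sub intervalIntegrable_const
        ((continuousOn_inv₀.mono fun t ht => (hpos t ht).ne').intervalIntegrable.const_mul a),
      intervalIntegral.integral_const_mul, integral_inv_of_pos ha (ha.trans_le ham)]
    simp

lemma integral_sub_mul_inv_right {m b : ℝ} (hm : 0 < m) (hmb : m ≤ b) :
    ∫ t in m..b, (b - t) * t⁻¹ = b * log (b / m) - (b - m) := by
  have hpos : ∀ t ∈ uIcc m b, 0 < t := fun t ht => hm.trans_le (by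
    rw [uIcc_of_le hmb] at ht; exact ht.1)
  rw [integral_congr (g := fun t => b * t⁻¹ - 1) fun t ht => by
      field_simp [(hpos t ht).ne'],
    integral_sub
      ((continuousOn_inv₀.mono fun t ht => (hpos t ht).ne').intervalIntegrable.const_mul b)
      intervalIntegrable_const,
    intervalIntegral.integral_const_mul, integral_inv_of_pos hm (hm.trans_le hmb)]
  simp

lemma integral_tent_mul_inv {a b : ℝ} (ha : 0 ≤ a) (hab : a < b) :
    ∫ t in a..b, tent a b t * t⁻¹ = jsSummand a b := by
  have hm : 0 < (a + b) / 2 := by linarith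
  rw [integral_tent_mul hab.le ((intervalIntegrable_iff_integrableOn_Ioc_of_le hab.le).2
      (integrableOn_tent_mul_inv ha)),
    integral_sub_mul_inv_left ha (by linarith), integral_sub_mul_inv_right hm (by linarith),
    jsSummand, ← inv_div a, log_inv]
  ring

lemma jsSummand_nonneg {a b : ℝ} (ha : 0 ≤ a) (hb : 0 ≤ b) : 0 ≤ jsSummand a b := by
  wlog hab : a ≤ b generalizing a b
  · rw [jsSummand_comm]; exact this hb ha (by linarith)
  rcases hab.eq_or_lt with rfl | hab
  · rw [jsSummand_self]
  · rw [← integral_tent_mul_inv ha hab]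
    exact integral_nonneg hab.le fun t ht =>
      mul_nonneg (tent_nonneg ht) (inv_nonneg.2 (ha.trans ht.1))

lemma lintegral_exp_neg_mul_Ioi {t : ℝ} (ht : 0 < t) :
    ∫⁻ s in Ioi 0, ENNReal.ofReal (exp (-(s * t))) = ENNReal.ofReal t⁻¹ := by
  have hexp : ∀ s, exp (-(s * t)) = exp (-t * s) := fun s => by ring_nf
  simp_rw [hexp]
  rw [← ofReal_integral_eq_lintegral_ofReal (integrableOn_exp_mul_Ioi (by linarith) 0)
    (ae_of_all _ fun s => (exp_pos _).le), integral_exp_mul_Ioi (by linarith)]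
  simp

lemma lintegral_Ioi_integral_mul_exp {a b : ℝ} {k : ℝ → ℝ} (ha : 0 ≤ a) (hk : Continuous k)
    (hk0 : ∀ t ∈ Ioc a b, 0 ≤ k t) :
    ∫⁻ s in Ioi 0, ENNReal.ofReal (∫ t in Ioc a b, k t * exp (-(s * t))) =
      ∫⁻ t in Ioc a b, ENNReal.ofReal (k t * t⁻¹) := calc
  _ = ∫⁻ s in Ioi 0, ∫⁻ t in Ioc a b, ENNReal.ofReal (k t * exp (-(s * t))) :=
    setLIntegral_congr_fun measurableSet_Ioi fun s _ =>
      ofReal_integral_eq_lintegral_ofReal (by fun_prop : Continuous _).integrableOn_Ioc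
        ((ae_restrict_mem measurableSet_Ioc).mono fun t ht =>
          mul_nonneg (hk0 t ht) (exp_pos _).le)
  _ = ∫⁻ t in Ioc a b, ∫⁻ s in Ioi 0, ENNReal.ofReal (k t * exp (-(s * t))) :=
    lintegral_lintegral_swap (by fun_prop)
  _ = ∫⁻ t in Ioc a b, ENNReal.ofReal (k t * t⁻¹) := by
    refine setLIntegral_congr_fun measurableSet_Ioc fun t ht => ?_
    simp_rw [ENNReal.ofReal_mul (hk0 t ht)]
    rw [lintegral_const_mul' _ _ ENNReal.ofReal_ne_top,
      lintegral_exp_neg_mul_Ioi (ha.trans_lt ht.1)]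

lemma lintegral_sq_sub_jsFeature {a b : ℝ} (ha : 0 ≤ a) (hb : 0 ≤ b) :
    ∫⁻ s in Ioi 0, ENNReal.ofReal ((jsFeature a s - jsFeature b s) ^ 2) =
      ENNReal.ofReal (jsSummand a b) := by
  wlog hab : a ≤ b generalizing a b
  · simp_rw [jsSummand_comm a, ← neg_sub (jsFeature b _), neg_sq]
    exact this hb ha (by linarith)
  rcases hab.eq_or_lt with rfl | hab
  · simp [jsSummand_self]
  calc _ = ∫⁻ s in Ioi 0, ENNReal.ofReal (∫ t in Ioc a b, tent a b t * exp (-(s * t))) :=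
        setLIntegral_congr_fun measurableSet_Ioi fun s hs => by
          rw [← integral_of_le hab.le, integral_tent_mul_exp hab.le (ne_of_gt hs)]
    _ = ∫⁻ t in Ioc a b, ENNReal.ofReal (tent a b t * t⁻¹) :=
        lintegral_Ioi_integral_mul_exp ha (continuous_tent a b) fun t ht =>
          tent_nonneg (Ioc_subset_Icc_self ht)
    _ = ENNReal.ofReal (jsSummand a b) := by
        rw [← ofReal_integral_eq_lintegral_ofReal (integrableOn_tent_mul_inv ha)
          ((ae_restrict_mem measurableSet_Ioc).mono fun t ht =>
            mul_nonneg (tent_nonneg (Ioc_subset_Icc_self ht)) (inv_nonneg.2 (ha.trans ht.1.le))),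
          ← integral_of_le hab.le, integral_tent_mul_inv ha hab]

lemma measurable_jsFeature_sub (a b : ℝ) :
    Measurable fun s => jsFeature a s - jsFeature b s := by
  unfold jsFeature; fun_prop

lemma memLp_jsFeature_sub {a b : ℝ} (ha : 0 ≤ a) (hb : 0 ≤ b) :
    MemLp (fun s => jsFeature a s - jsFeature b s) 2 (volume.restrict (Ioi 0)) := by
  rw [memLp_two_iff_integrable_sq (measurable_jsFeature_sub a b).aestronglyMeasurable]
  refine ⟨((measurable_jsFeature_sub a b).pow_const 2).aestronglyMeasurable, ?_⟩
  rw [hasFiniteIntegral_iff_ofReal (ae_of_all _ fun s => sq_nonneg _),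
    lintegral_sq_sub_jsFeature ha hb]
  exact ENNReal.ofReal_lt_top

lemma integral_sq_sub_jsFeature {a b : ℝ} (ha : 0 ≤ a) (hb : 0 ≤ b) :
    ∫ s in Ioi 0, (jsFeature a s - jsFeature b s) ^ 2 = jsSummand a b := by
  rw [integral_eq_lintegral_of_nonneg_ae (ae_of_all _ fun s => sq_nonneg _)
      ((measurable_jsFeature_sub a b).pow_const 2).aestronglyMeasurable,
    lintegral_sq_sub_jsFeature ha hb, ENNReal.toReal_ofReal (jsSummand_nonneg ha hb)]

lemma MeasureTheory.MemLp.norm_toLp_two {α : Type*} [MeasurableSpace α] {μ : Measure α}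
    {u : α → ℝ} (hu : MemLp u 2 μ) : ‖hu.toLp u‖ = √(∫ x, u x ^ 2 ∂μ) := by
  rw [Lp.norm_toLp, hu.eLpNorm_eq_integral_rpow_norm two_ne_zero ENNReal.ofNat_ne_top,
    ENNReal.toReal_ofReal (by positivity), sqrt_eq_rpow, ENNReal.toReal_ofNat, one_div]
  simp only [Real.norm_eq_abs, rpow_two, sq_abs]

lemma sqrt_integral_sq_add_le {α : Type*} [MeasurableSpace α] {μ : Measure α}
    {u v : α → ℝ} (hu : MemLp u 2 μ) (hv : MemLp v 2 μ) :
    √(∫ x, (u x + v x) ^ 2 ∂μ) ≤ √(∫ x, u x ^ 2 ∂μ) + √(∫ x, v x ^ 2 ∂μ) := calc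
  _ = ‖hu.toLp u + hv.toLp v‖ := by rw [← MemLp.toLp_add, (hu.add hv).norm_toLp_two]; rfl
  _ ≤ ‖hu.toLp u‖ + ‖hv.toLp v‖ := norm_add_le _ _
  _ = _ := by rw [hu.norm_toLp_two, hv.norm_toLp_two]

lemma sqrt_jsSummand_le {a b c : ℝ} (ha : 0 ≤ a) (hb : 0 ≤ b) (hc : 0 ≤ c) :
    √(jsSummand a c) ≤ √(jsSummand a b) + √(jsSummand b c) := by
  have h := sqrt_integral_sq_add_le (memLp_jsFeature_sub ha hb) (memLp_jsFeature_sub hb hc)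
  simp only [sub_add_sub_cancel] at h
  rwa [integral_sq_sub_jsFeature ha hb, integral_sq_sub_jsFeature hb hc,
    integral_sq_sub_jsFeature ha hc] at h

lemma sqrt_sq_add_sq_le (b b' c c' : ℝ) :
    √((b + c) ^ 2 + (b' + c') ^ 2) ≤ √(b ^ 2 + b' ^ 2) + √(c ^ 2 + c' ^ 2) := by
  have hcs : b * c + b' * c' ≤ √(b ^ 2 + b' ^ 2) * √(c ^ 2 + c' ^ 2) := by
    rw [← sqrt_mul (by positivity)]
    exact (le_abs_self _).trans (abs_le_sqrt (by nlinarith [sq_nonneg (b * c' - b' * c)]))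
  rw [sqrt_le_left (by positivity), add_sq (√_), sq_sqrt (by positivity), sq_sqrt (by positivity)]
  nlinarith

lemma sqrt_add_le_of_sqrt_le {A A' B B' C C' : ℝ} (hB : 0 ≤ B) (hB' : 0 ≤ B') (hC : 0 ≤ C)
    (hC' : 0 ≤ C') (h : √A ≤ √B + √C) (h' : √A' ≤ √B' + √C') :
    √(A + A') ≤ √(B + B') + √(C + C') := by
  rw [sqrt_le_left (by positivity)] at h h'
  calc √(A + A') ≤ √((√B + √C) ^ 2 + (√B' + √C') ^ 2) := sqrt_le_sqrt (by linarith)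
    _ ≤ √(√B ^ 2 + √B' ^ 2) + √(√C ^ 2 + √C' ^ 2) := sqrt_sq_add_sq_le _ _ _ _
    _ = √(B + B') + √(C + C') := by rw [sq_sqrt hB, sq_sqrt hB', sq_sqrt hC, sq_sqrt hC']

theorem stmt15 (x y z : ℝ) (hx : x ∈ Set.Icc (0:ℝ) 1) (hy : y ∈ Set.Icc (0:ℝ) 1)
    (hz : z ∈ Set.Icc (0:ℝ) 1) :
    Real.sqrt (jsDiv (bern x) (bern z)) ≤
      Real.sqrt (jsDiv (bern x) (bern y)) + Real.sqrt (jsDiv (bern y) (bern z)) := by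
  obtain ⟨hx0, hx1⟩ := hx
  obtain ⟨hy0, hy1⟩ := hy
  obtain ⟨hz0, hz1⟩ := hz
  have hx1' : 0 ≤ 1 - x := by linarith
  have hy1' : 0 ≤ 1 - y := by linarith
  have hz1' : 0 ≤ 1 - z := by linarith
  simp only [jsDiv_bern, sqrt_div' _ zero_le_two, ← add_div]
  gcongr
  exact sqrt_add_le_of_sqrt_le (jsSummand_nonneg hx0 hy0) (jsSummand_nonneg hx1' hy1')
    (jsSummand_nonneg hy0 hz0) (jsSummand_nonneg hy1' hz1')
    (sqrt_jsSummand_le hx0 hy0 hz0) (sqrt_jsSummand_le hx1' hy1' hz1')
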